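/- Let V_f (resp. V_∞) be the set of vertices emitting finitely (resp. infinitely) many edges, Y_f = {α ∈ Y : r(α) ∈ V_f} and Y_∞ = {α ∈ Y : r(α) ∈ V_∞}. Then: (1) for every y ∈ Y_∞, the sets D_y \ (D_{ye_1} ∪ ⋯ ∪ D_{ye_n}), where {e_1, …, e_n} ranges over finite sets of edges with s(e_i) = r(y), form a neighborhood basis at y in Y ∪ Z; and (2) for α ∈ Y, the singleton {α} is open in Y ∪ Z if and only if α ∈ Y_f. -/

import Mathlib

namespace GraphCstar

/-- A directed graph: vertices, edges, source and range maps. -/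
structure Graph where
  V : Type
  Ed : Type
  src : Ed → V
  rng : Ed → V

variable (G : Graph)

/-- Validity of a list of edges as a path starting at vertex `v`. -/
def Valid : G.V → List G.Ed → Prop
  | _, [] => True
  | v, e :: l => G.src e = v ∧ Valid (G.rng e) l

/-- Terminal vertex of a list of edges starting at `v`. -/
def rngTo : G.V → List G.Ed → G.V
  | v, [] => v
  | _, e :: l => rngTo (G.rng e) l

theorem valid_append (l₁ l₂ : List G.Ed) (v : G.V) :
    Valid G v (l₁ ++ l₂) ↔ Valid G v l₁ ∧ Valid G (rngTo G v l₁) l₂ := by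
  induction l₁ generalizing v with
  | nil => simp [Valid, rngTo]
  | cons e l ih => simp [Valid, rngTo, ih, and_assoc]

theorem rngTo_append (l₁ l₂ : List G.Ed) (v : G.V) :
    rngTo G v (l₁ ++ l₂) = rngTo G (rngTo G v l₁) l₂ := by
  induction l₁ generalizing v with
  | nil => rfl
  | cons e l ih => simp [rngTo, ih]

theorem valid_drop {v : G.V} {l : List G.Ed} (n : ℕ) (h : Valid G v l) :
    Valid G (rngTo G v (l.take n)) (l.drop n) := by
  have h' : Valid G v (l.take n ++ l.drop n) := by
    rw [List.take_append_drop]; exact h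
  exact ((valid_append G _ _ _).mp h').2

/-- A finite path in the graph `G`; vertices are the paths of length `0`. -/
structure FinPath where
  start : G.V
  edges : List G.Ed
  valid : Valid G start edges

namespace FinPath

variable {G}

/-- The terminal vertex (range) of a finite path. -/
def rngF (α : FinPath G) : G.V := rngTo G α.start α.edges

/-- The length of a finite path. -/
def len (α : FinPath G) : ℕ := α.edges.length

/-- The finite path of length `0` at the vertex `v`. -/
def vp (v : G.V) : FinPath G := ⟨v, [], trivial⟩

/-- The finite path consisting of the single edge `e`. -/
def ep (e : G.Ed) : FinPath G := ⟨G.src e, [e], ⟨rfl, trivial⟩⟩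

/-- Concatenation of finite paths. -/
def concat (α β : FinPath G) (h : β.start = α.rngF) : FinPath G :=
  ⟨α.start, α.edges ++ β.edges,
    (valid_append G _ _ _).mpr
      ⟨α.valid, by
        show Valid G α.rngF β.edges
        rw [← h]; exact β.valid⟩⟩

theorem rngF_concat (α β : FinPath G) (h : β.start = α.rngF) :
    (α.concat β h).rngF = β.rngF := by
  show rngTo G α.start (α.edges ++ β.edges) = _
  rw [rngTo_append]
  show rngTo G α.rngF β.edges = _
  rw [← h]; rfl

end FinPath

/-- `α` is an initial segment of `β`. -/
def IsPref (α β : FinPath G) : Prop := α.start = β.start ∧ α.edges <+: β.edges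

/-- The "remainder" path: if `α` is an initial segment of `β`, the path `μ` with
`β = αμ` (for other inputs the value is junk). -/
def diff (α β : FinPath G) : FinPath G :=
  ⟨rngTo G β.start (β.edges.take α.edges.length),
    β.edges.drop α.edges.length, valid_drop G _ β.valid⟩

open Classical in
/-- Totalized concatenation of finite paths (junk value when endpoints do not match). -/
noncomputable def catP (α β : FinPath G) : FinPath G :=
  if h : β.start = α.rngF then α.concat β h else α

open Classical in
/-- The product on `T = {(α,β) ∈ Y × Y : r(α) = r(β)} ∪ {z}`, with `z` encoded as `none`. -/
noncomputable def mulT :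
    Option (FinPath G × FinPath G) → Option (FinPath G × FinPath G) →
      Option (FinPath G × FinPath G)
  | none, _ => none
  | _, none => none
  | some (α₁, β₁), some (α₂, β₂) =>
    if IsPref G β₁ α₂ then some (catP G α₁ (diff G β₁ α₂), β₂)
    else if IsPref G α₂ β₁ then some (α₁, catP G β₂ (diff G α₂ β₁))
    else none

/-- The involution on `T`. -/
def starT :
    Option (FinPath G × FinPath G) → Option (FinPath G × FinPath G)
  | none => none
  | some (α, β) => some (β, α)

/-- The subset of `Option (FinPath G × FinPath G)` corresponding to
`T = {(α,β) : r(α) = r(β)} ∪ {z}`. -/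
def TsetT : Set (Option (FinPath G × FinPath G)) :=
  {t | ∀ α β : FinPath G, t = some (α, β) → α.rngF = β.rngF}

/-- An infinite path in the graph `G`. -/
structure InfPath where
  seq : ℕ → G.Ed
  valid : ∀ i, G.src (seq (i + 1)) = G.rng (seq i)

/-- The initial vertex of an infinite path. -/
def InfPath.start {G : Graph} (z : InfPath G) : G.V := G.src (z.seq 0)

/-- Prepending an edge to an infinite path. -/
def consInf (e : G.Ed) (z : InfPath G) (h : z.start = G.rng e) : InfPath G where
  seq := fun n =>
    match n with
    | 0 => e
    | m + 1 => z.seq m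
  valid := fun i =>
    match i with
    | 0 => h
    | m + 1 => z.valid m

/-- Prepending a finite edge list to an infinite path (with the starting vertex recorded). -/
def appendInfAux :
    (l : List G.Ed) → (v : G.V) → Valid G v l → (z : InfPath G) →
      z.start = rngTo G v l → {w : InfPath G // w.start = v}
  | [], _, _, z, h => ⟨z, h⟩
  | e :: l, v, hv, z, h =>
    let w := appendInfAux l (G.rng e) hv.2 z h
    ⟨consInf G e w.1 w.2, hv.1⟩

/-- Concatenation of a finite path with an infinite path. -/
def FinPath.concatInf {G : Graph} (α : FinPath G) (z : InfPath G)
    (h : z.start = α.rngF) : InfPath G :=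
  (appendInfAux G α.edges α.start α.valid z h).1

/-- The path space `Y ∪ Z` of all finite and infinite paths. -/
def PathSp := FinPath G ⊕ InfPath G

/-- The initial vertex of a (finite or infinite) path. -/
def startOf : PathSp G → G.V
  | .inl α => α.start
  | .inr z => z.start

/-- The length of a path, in `ℕ∞`. -/
def lenOf : PathSp G → ℕ∞
  | .inl α => (α.edges.length : ℕ∞)
  | .inr _ => ⊤

/-- The `i`-th edge (0-indexed) of a path, if it exists. -/
def nthEdge : PathSp G → ℕ → Option G.Ed
  | .inl α, i => α.edges[i]?
  | .inr z, i => some (z.seq i)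

/-- `x = αγ` for some (finite or infinite, possibly length `0`) path `γ`;
that is, `α` is an initial segment of `x`, i.e. `x ∈ D_α`. -/
def Ext (α : FinPath G) (x : PathSp G) : Prop :=
  (∃ (β : FinPath G) (h : β.start = α.rngF), x = .inl (α.concat β h)) ∨
  (∃ (w : InfPath G) (h : w.start = α.rngF), x = .inr (α.concatInf w h))

/-- The basic set `D_α ⊆ Y ∪ Z`. -/
def Dset (α : FinPath G) : Set (PathSp G) := {x | Ext G α x}

/-- The topology on the path space, generated by the sets `D_α` and their complements. -/
def pathTop : TopologicalSpace (PathSp G) :=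
  .generateFrom (Set.range (Dset G) ∪ Set.range fun α => (Dset G α)ᶜ)

/-- The vertex `v` emits infinitely many edges. -/
def Vinf (v : G.V) : Prop := {e | G.src e = v}.Infinite

/-- Membership in `X = Y_∞ ∪ Z`. -/
def memX : PathSp G → Prop
  | .inl α => Vinf G α.rngF
  | .inr _ => True

/-- The set `X = Y_∞ ∪ Z`. -/
def Xset : Set (PathSp G) := {x | memX G x}

/-- Tail equivalence of paths: `x = αγ` and `y = βγ` for finite paths `α, β`
and a common (finite or infinite) path `γ`. -/
def TailEq (x y : PathSp G) : Prop :=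
  (∃ (α β γ : FinPath G) (h₁ : γ.start = α.rngF) (h₂ : γ.start = β.rngF),
      x = .inl (α.concat γ h₁) ∧ y = .inl (β.concat γ h₂)) ∨
  (∃ (α β : FinPath G) (w : InfPath G) (h₁ : w.start = α.rngF)
      (h₂ : w.start = β.rngF),
      x = .inr (α.concatInf w h₁) ∧ y = .inr (β.concatInf w h₂))

/-- A subset of the path space is invariant (a union of tail-equivalence classes). -/
def InvariantS (F : Set (PathSp G)) : Prop :=
  ∀ x ∈ F, ∀ y, TailEq G x y → y ∈ F

/-- Membership `(x, k, y) ∈ G` for the path groupoid: `x = αγ`, `y = βγ` and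
`k = l(α) - l(β)`. -/
def InG (x : PathSp G) (k : ℤ) (y : PathSp G) : Prop :=
  (∃ (α β γ : FinPath G) (h₁ : γ.start = α.rngF) (h₂ : γ.start = β.rngF),
      x = .inl (α.concat γ h₁) ∧ y = .inl (β.concat γ h₂) ∧
        k = (α.len : ℤ) - (β.len : ℤ)) ∨
  (∃ (α β : FinPath G) (w : InfPath G) (h₁ : w.start = α.rngF)
      (h₂ : w.start = β.rngF),
      x = .inr (α.concatInf w h₁) ∧ y = .inr (β.concatInf w h₂) ∧
        k = (α.len : ℤ) - (β.len : ℤ))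

/-- There is a finite path from `u` to `w`. -/
def Reach (u w : G.V) : Prop := ∃ β : FinPath G, β.start = u ∧ β.rngF = w

/-- A loop based at the vertex `v`. -/
def LoopAt (v : G.V) (α : FinPath G) : Prop :=
  α.edges ≠ [] ∧ α.start = v ∧ α.rngF = v ∧
    ∀ i e, i + 1 < α.edges.length → α.edges[i]? = some e → G.rng e ≠ v

/-- Condition (K): no vertex has exactly one loop based at it. -/
def CondK : Prop := ¬ ∃ v : G.V, ∃! α : FinPath G, LoopAt G v α

/-- A point of the path space has trivial isotropy if whenever `x = αγ = βγ`
then `l(α) = l(β)`. -/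
def TrivIso (x : PathSp G) : Prop :=
  ∀ α β : FinPath G,
    ((∃ (γ : FinPath G) (h₁ : γ.start = α.rngF) (h₂ : γ.start = β.rngF),
        x = .inl (α.concat γ h₁) ∧ x = .inl (β.concat γ h₂)) ∨
     (∃ (w : InfPath G) (h₁ : w.start = α.rngF) (h₂ : w.start = β.rngF),
        x = .inr (α.concatInf w h₁) ∧ x = .inr (β.concatInf w h₂))) →
    α.len = β.len

/-! Two basic sets `D_α`, `D_β` are nested when one of `α`, `β` extends the other and disjoint
otherwise, and they are clopen. So if a subbasic neighbourhood `D_βᶜ` of `y` meets `D_y`, then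
`β = y e γ` for an edge `e` out of `r(y)`, and `D_y \ D_{ye} ⊆ D_βᶜ`; hence every neighbourhood of
`y` contains some `D_y \ (D_{ye₁} ∪ ⋯ ∪ D_{yeₙ})`. When `r(y)` emits finitely many edges, removing
all of them leaves exactly `{y}`; when it emits infinitely many, each such set contains some
`ye ≠ y`. -/

theorem _root_.TopologicalSpace.hasBasis_nhds_generateFrom {α ι : Type*} {g : Set (Set α)}
    {a : α} {p : ι → Prop} {s : ι → Set α}
    (hdir : ∀ i, p i → ∀ j, p j → ∃ k, p k ∧ s k ⊆ s i ∧ s k ⊆ s j) (hne : ∃ i, p i)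
    (hmem : ∀ i, p i → s i ∈ @nhds α (.generateFrom g) a)
    (hsub : ∀ t ∈ g, a ∈ t → ∃ i, p i ∧ s i ⊆ t) :
    (@nhds α (.generateFrom g) a).HasBasis p s := by
  have hinf := Filter.hasBasis_biInf_principal' hdir hne
  convert hinf using 1
  refine le_antisymm (hinf.ge_iff.2 hmem) ?_
  rw [TopologicalSpace.nhds_generateFrom]
  exact le_iInf₂ fun t ⟨ha, ht⟩ => Filter.le_principal_iff.2 (hinf.mem_iff.2 (hsub t ht ha))

section PathSpace

variable {G}

theorem FinPath.ext {α β : FinPath G} (hs : α.start = β.start) (he : α.edges = β.edges) :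
    α = β := by
  cases α; cases β; cases hs; cases he; rfl

theorem InfPath.ext {z w : InfPath G} (h : z.seq = w.seq) : z = w := by
  cases z; cases w; cases h; rfl

theorem InfPath.src_seq_length {z : InfPath G} {v : G.V} {l : List G.Ed} (hv : z.start = v)
    (hl : ∀ i (h : i < l.length), z.seq i = l[i]) : G.src (z.seq l.length) = rngTo G v l := by
  rcases List.eq_nil_or_concat' l with rfl | ⟨L, e, rfl⟩
  · exact hv
  · have he : z.seq L.length = e := by simpa using hl L.length (by simp)
    rw [List.length_append, List.length_singleton, z.valid, he, rngTo_append]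
    rfl

theorem appendInfAux_seq (l : List G.Ed) (v : G.V) (hv : Valid G v l) (z : InfPath G)
    (h : z.start = rngTo G v l) (n : ℕ) :
    (appendInfAux G l v hv z h).1.seq n = l[n]?.getD (z.seq (n - l.length)) := by
  induction l generalizing v n with
  | nil => simp [appendInfAux]
  | cons e l ih =>
    cases n with
    | zero => simp [appendInfAux, consInf]
    | succ m =>
      show (appendInfAux G l (G.rng e) hv.2 z h).1.seq m = _
      simpa using ih (G.rng e) hv.2 h m

theorem concatInf_start (α : FinPath G) (w : InfPath G) (h : w.start = α.rngF) :
    (α.concatInf w h).start = α.start :=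
  (appendInfAux G α.edges α.start α.valid w h).2

theorem concatInf_seq (α : FinPath G) (w : InfPath G) (h : w.start = α.rngF) (n : ℕ) :
    (α.concatInf w h).seq n = α.edges[n]?.getD (w.seq (n - α.edges.length)) :=
  appendInfAux_seq α.edges α.start α.valid w h n

theorem mem_Dset_inl {α β : FinPath G} : Sum.inl β ∈ Dset G α ↔ IsPref G α β := by
  constructor
  · rintro (⟨γ, h, hβ⟩ | ⟨w, h, hβ⟩)
    · obtain rfl := Sum.inl_injective hβ
      exact ⟨rfl, List.prefix_append _ _⟩
    · cases hβ
  · rintro ⟨hs, t, ht⟩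
    have hv : Valid G α.rngF t := by
      have := β.valid
      rw [← ht, ← hs, valid_append] at this
      exact this.2
    exact Or.inl ⟨⟨α.rngF, t, hv⟩, rfl, congrArg Sum.inl (FinPath.ext hs.symm ht.symm)⟩

theorem mem_Dset_inr {α : FinPath G} {z : InfPath G} :
    Sum.inr z ∈ Dset G α ↔
      z.start = α.start ∧ ∀ i (h : i < α.edges.length), z.seq i = α.edges[i] := by
  constructor
  · rintro (⟨γ, h, hz⟩ | ⟨w, h, hz⟩)
    · cases hz
    · obtain rfl := Sum.inr_injective hz
      exact ⟨concatInf_start α w h, fun i hi => by simp [concatInf_seq, hi]⟩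
  · rintro ⟨hs, hseq⟩
    let w : InfPath G := ⟨fun i => z.seq (i + α.edges.length), fun i => by
      simpa [Nat.add_right_comm] using z.valid (i + α.edges.length)⟩
    have hw : w.start = α.rngF := by
      show G.src (z.seq (0 + α.edges.length)) = _
      rw [Nat.zero_add]
      exact InfPath.src_seq_length hs hseq
    refine Or.inr ⟨w, hw, congrArg Sum.inr (InfPath.ext (funext fun i => ?_))⟩
    rw [concatInf_seq]
    rcases lt_or_ge i α.edges.length with hi | hi
    · simp [hi, hseq i hi]
    · simp [List.getElem?_eq_none hi, w, Nat.sub_add_cancel hi]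

theorem mem_Dset_iff {α : FinPath G} {x : PathSp G} :
    x ∈ Dset G α ↔
      startOf G x = α.start ∧ ∀ i (h : i < α.edges.length), nthEdge G x i = some α.edges[i] := by
  cases x with
  | inl β => exact mem_Dset_inl.trans (by rw [IsPref, List.prefix_iff_getElem?, eq_comm]; rfl)
  | inr z => exact mem_Dset_inr.trans (by simp [startOf, nthEdge])

theorem Dset_mono {α β : FinPath G} (h : IsPref G α β) : Dset G β ⊆ Dset G α := by
  intro x hx
  rw [mem_Dset_iff] at hx ⊢
  have hlen := h.2.length_le
  exact ⟨hx.1.trans h.1.symm, fun i hi => by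
    rw [hx.2 i (hi.trans_le hlen), h.2.getElem hi]⟩

theorem isPref_of_mem_Dset {α β : FinPath G} {x : PathSp G} (hα : x ∈ Dset G α)
    (hβ : x ∈ Dset G β) (hle : α.edges.length ≤ β.edges.length) : IsPref G α β := by
  rw [mem_Dset_iff] at hα hβ
  refine ⟨hα.1.symm.trans hβ.1, List.prefix_iff_getElem?.2 fun i hi => ?_⟩
  rw [List.getElem?_eq_getElem (hi.trans_le hle)]
  exact (hβ.2 i (hi.trans_le hle)).symm.trans (hα.2 i hi)

theorem catP_ep_start {y : FinPath G} {e : G.Ed} (h : G.src e = y.rngF) :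
    (catP G y (.ep e)).start = y.start := by
  rw [catP, dif_pos (show (FinPath.ep e).start = y.rngF from h)]
  rfl

theorem catP_ep_edges {y : FinPath G} {e : G.Ed} (h : G.src e = y.rngF) :
    (catP G y (.ep e)).edges = y.edges ++ [e] := by
  rw [catP, dif_pos (show (FinPath.ep e).start = y.rngF from h)]
  rfl

theorem src_eq_rngF_of_mem_Dset {α : FinPath G} {x : PathSp G} {e : G.Ed}
    (hx : x ∈ Dset G α) (he : nthEdge G x α.edges.length = some e) : G.src e = α.rngF := by
  rcases hx with ⟨⟨s, _ | ⟨e', t⟩, hv⟩, h, rfl⟩ | ⟨w, h, rfl⟩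
  · simp [nthEdge, FinPath.concat] at he
  · obtain rfl : e' = e := by simpa [nthEdge, FinPath.concat] using he
    exact hv.1.trans h
  · obtain rfl : w.seq 0 = e := by simpa [nthEdge, concatInf_seq] using he
    exact h

theorem mem_Dset_catP_ep {α : FinPath G} {x : PathSp G} {e : G.Ed} (hx : x ∈ Dset G α)
    (he : nthEdge G x α.edges.length = some e) : x ∈ Dset G (catP G α (.ep e)) := by
  have hsrc := src_eq_rngF_of_mem_Dset hx he
  rw [mem_Dset_iff] at hx ⊢
  rw [catP_ep_start hsrc, catP_ep_edges hsrc]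
  refine ⟨hx.1, fun i hi => ?_⟩
  rcases lt_or_eq_of_le (Nat.le_of_lt_succ (by simpa using hi)) with hi' | rfl
  · rw [hx.2 i hi', List.getElem_append_left hi']
  · simpa using he

theorem eq_inl_of_mem_Dset_of_nthEdge_eq_none {α : FinPath G} {x : PathSp G} (hx : x ∈ Dset G α)
    (hnone : nthEdge G x α.edges.length = none) : x = .inl α := by
  rcases x with β | z
  · have hαβ := mem_Dset_inl.1 hx
    have hle : β.edges.length ≤ α.edges.length := List.getElem?_eq_none_iff.1 hnone
    exact congrArg _ (FinPath.ext hαβ.1.symm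
      (hαβ.2.eq_of_length (le_antisymm hαβ.2.length_le hle)).symm)
  · cases hnone

theorem inl_notMem_Dset_catP_ep {y : FinPath G} {e : G.Ed} (h : G.src e = y.rngF) :
    Sum.inl y ∉ Dset G (catP G y (.ep e)) := by
  rw [mem_Dset_inl]
  rintro ⟨-, hp⟩
  have := hp.length_le
  rw [catP_ep_edges h] at this
  simp at this

def basicNbhd (y : FinPath G) (F : Finset G.Ed) : Set (PathSp G) :=
  Dset G y \ ⋃ e ∈ F, Dset G (catP G y (.ep e))

theorem basicNbhd_anti {y : FinPath G} {F F' : Finset G.Ed} (h : F ⊆ F') :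
    basicNbhd y F' ⊆ basicNbhd y F :=
  Set.sdiff_subset_sdiff_right (Set.biUnion_subset_biUnion_left h)

theorem inl_mem_basicNbhd {y : FinPath G} {F : Finset G.Ed}
    (hF : ∀ e ∈ F, G.src e = y.rngF) : Sum.inl y ∈ basicNbhd y F := by
  refine ⟨mem_Dset_inl.2 ⟨rfl, List.prefix_refl _⟩, ?_⟩
  intro hmem
  obtain ⟨e, he, hmem⟩ := Set.mem_iUnion₂.1 hmem
  exact inl_notMem_Dset_catP_ep (hF e he) hmem

theorem inl_catP_ep_mem_basicNbhd {y : FinPath G} {F : Finset G.Ed}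
    (hF : ∀ e ∈ F, G.src e = y.rngF) {e : G.Ed} (he : G.src e = y.rngF) (heF : e ∉ F) :
    Sum.inl (catP G y (.ep e)) ∈ basicNbhd y F := by
  refine ⟨mem_Dset_inl.2 ⟨(catP_ep_start he).symm, ?_⟩, fun hmem => ?_⟩
  · rw [catP_ep_edges he]
    exact List.prefix_append _ _
  · obtain ⟨e', he'F, hmem⟩ := Set.mem_iUnion₂.1 hmem
    obtain ⟨-, hp⟩ := mem_Dset_inl.1 hmem
    rw [catP_ep_edges he, catP_ep_edges (hF e' he'F)] at hp
    obtain rfl : e' = e := by simpa using hp.eq_of_length (by simp)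
    exact heF he'F

theorem exists_basicNbhd_subset_compl_Dset {y β : FinPath G} (hy : Sum.inl y ∉ Dset G β) :
    ∃ F : Finset G.Ed, (∀ e ∈ F, G.src e = y.rngF) ∧ basicNbhd y F ⊆ (Dset G β)ᶜ := by
  have hβ : Sum.inl β ∈ Dset G β := mem_Dset_inl.2 ⟨rfl, List.prefix_refl _⟩
  by_cases hyβ : IsPref G y β
  · have hβy : Sum.inl β ∈ Dset G y := mem_Dset_inl.2 hyβ
    have hlt : y.edges.length < β.edges.length := by
      by_contra! hle
      exact hy (mem_Dset_inl.2 (isPref_of_mem_Dset hβ hβy hle))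
    have hβe : nthEdge G (.inl β) y.edges.length = some β.edges[y.edges.length] :=
      List.getElem?_eq_getElem hlt
    refine ⟨{β.edges[y.edges.length]}, by simpa using src_eq_rngF_of_mem_Dset hβy hβe, ?_⟩
    rintro x ⟨hxy, hxe⟩ hxβ
    refine hxe (Set.mem_biUnion (Finset.mem_singleton_self _) (mem_Dset_catP_ep hxy ?_))
    exact (mem_Dset_iff.1 hxβ).2 _ hlt
  · refine ⟨∅, by simp, ?_⟩
    rintro x ⟨hxy, -⟩ hxβ
    rcases le_total y.edges.length β.edges.length with hle | hle
    · exact hyβ (isPref_of_mem_Dset hxy hxβ hle)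
    · exact hy (mem_Dset_inl.2 (isPref_of_mem_Dset hxβ hxy hle))

theorem exists_basicNbhd_subset {y : FinPath G} {s : Set (PathSp G)}
    (hs : s ∈ Set.range (Dset G) ∪ Set.range fun α => (Dset G α)ᶜ) (hy : Sum.inl y ∈ s) :
    ∃ F : Finset G.Ed, (∀ e ∈ F, G.src e = y.rngF) ∧ basicNbhd y F ⊆ s := by
  rcases hs with ⟨β, rfl⟩ | ⟨β, rfl⟩
  · exact ⟨∅, by simp, Set.sdiff_subset.trans (Dset_mono (mem_Dset_inl.1 hy))⟩
  · exact exists_basicNbhd_subset_compl_Dset hy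

theorem basicNbhd_eq_singleton {α : FinPath G} (hfin : {e | G.src e = α.rngF}.Finite) :
    basicNbhd α hfin.toFinset = {Sum.inl α} := by
  refine Set.Subset.antisymm (fun x ⟨hxα, hxe⟩ => ?_)
    (Set.singleton_subset_iff.2 (inl_mem_basicNbhd fun e he => hfin.mem_toFinset.1 he))
  cases he : nthEdge G x α.edges.length with
  | none => exact eq_inl_of_mem_Dset_of_nthEdge_eq_none hxα he
  | some e =>
    exact (hxe (Set.mem_biUnion (hfin.mem_toFinset.2 (src_eq_rngF_of_mem_Dset hxα he))
      (mem_Dset_catP_ep hxα he))).elim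

attribute [local instance] pathTop

theorem isOpen_basicNbhd (y : FinPath G) (F : Finset G.Ed) : IsOpen (basicNbhd y F) :=
  IsOpen.sdiff (.basic _ (.inl ⟨y, rfl⟩)) <| isClosed_biUnion_finset fun _ _ =>
    isOpen_compl_iff.1 (.basic _ (.inr ⟨_, rfl⟩))

open Classical in
theorem nhds_inl_hasBasis (y : FinPath G) :
    (nhds (X := PathSp G) (Sum.inl y)).HasBasis (fun F : Finset G.Ed => ∀ e ∈ F, G.src e = y.rngF)
      (basicNbhd y) :=
  TopologicalSpace.hasBasis_nhds_generateFrom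
    (fun F hF F' hF' => ⟨F ∪ F', by simpa [or_imp, forall_and] using ⟨hF, hF'⟩,
      basicNbhd_anti Finset.subset_union_left, basicNbhd_anti Finset.subset_union_right⟩)
    ⟨∅, by simp⟩
    (fun F hF => (isOpen_basicNbhd y F).mem_nhds (inl_mem_basicNbhd hF))
    (fun _ hs hy => exists_basicNbhd_subset hs hy)

theorem isOpen_singleton_inl_iff {α : FinPath G} :
    IsOpen ({Sum.inl α} : Set (PathSp G)) ↔ {e | G.src e = α.rngF}.Finite := by
  refine ⟨fun hopen => ?_, fun hfin => basicNbhd_eq_singleton hfin ▸ isOpen_basicNbhd α _⟩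
  by_contra hinf
  obtain ⟨F, hF, hsub⟩ := (nhds_inl_hasBasis α).mem_iff.1 (hopen.mem_nhds rfl)
  obtain ⟨e, he, heF⟩ := Set.Infinite.exists_notMem_finset hinf F
  have hlen := congrArg (·.edges.length)
    (Sum.inl_injective (hsub (inl_catP_ep_mem_basicNbhd hF he heF)))
  simp [catP_ep_edges he] at hlen

end PathSpace

theorem nhds_basis_at_finite_path_and_isolated_points_general (G : Graph) :
    (∀ y : FinPath G, Vinf G y.rngF →
      (@nhds (PathSp G) (pathTop G) (Sum.inl y)).HasBasis
        (fun F : Finset G.Ed => ∀ e ∈ F, G.src e = y.rngF)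
        (fun F => Dset G y \ ⋃ e ∈ F, Dset G (catP G y (FinPath.ep e)))) ∧
    (∀ α : FinPath G,
      @IsOpen (PathSp G) (pathTop G) {Sum.inl α} ↔ {e : G.Ed | G.src e = α.rngF}.Finite) :=
  ⟨fun y _ => nhds_inl_hasBasis y, fun _ => isOpen_singleton_inl_iff⟩

/-- (1) For every `y ∈ Y_∞`, the sets
`D_y \ (D_{ye_1} ∪ ⋯ ∪ D_{ye_n})`, where `{e_1, …, e_n}` ranges over finite sets of
edges starting at `r(y)`, form a neighborhood basis at `y` in `Y ∪ Z`;
(2) for `α ∈ Y`, the singleton `{α}` is open in `Y ∪ Z` iff `α ∈ Y_f`. -/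
theorem nhds_basis_at_finite_path_and_isolated_points
    (G : Graph) [Countable G.V] [Countable G.Ed]
    (hns : ∀ v : G.V, ∃ e : G.Ed, G.src e = v) :
    (∀ y : FinPath G, Vinf G y.rngF →
      (@nhds (PathSp G) (pathTop G) (Sum.inl y)).HasBasis
        (fun F : Finset G.Ed => ∀ e ∈ F, G.src e = y.rngF)
        (fun F => Dset G y \ ⋃ e ∈ F, Dset G (catP G y (FinPath.ep e)))) ∧
    (∀ α : FinPath G,
      @IsOpen (PathSp G) (pathTop G) {Sum.inl α} ↔ {e : G.Ed | G.src e = α.rngF}.Finite) :=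
  nhds_basis_at_finite_path_and_isolated_points_general G

end GraphCstar
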